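/- arXiv:0910.1306 — 8 statements merged into one kernel-verified Lean document; each statement's English description precedes it below -/
import Mathlib

section
/- Cyclicity of the symmetric monoidal trace: Let C be a symmetric monoidal category, let (M, M∨, η_M, ε_M) and (N, N∨, η_N, ε_N) be dual pairs in C, and let f : Q ⊗ M → N ⊗ P and g : K ⊗ N → M ⊗ L be morphisms. Then tr((g ⊗ id_P) ∘ (id_K ⊗ f)) = tr((id_N ⊗ s_{P,L}) ∘ (f ⊗ id_L) ∘ (id_Q ⊗ g) ∘ (s_{K,Q} ⊗ id_N)) as morphisms K ⊗ Q → L ⊗ P, where the left-hand trace is taken with respect to the dual pair (M, M∨) and the right-hand trace with respect to (N, N∨), s denotes the symmetry, and associativity isomorphisms are inserted as needed. -/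
open CategoryTheory Category MonoidalCategory

universe v u v' u'

/-- The data of a candidate dual pair in a monoidal category: an object `M`, an object `Mv`,
a coevaluation `η : 𝟙_ C ⟶ M ⊗ Mv` and an evaluation `ε : Mv ⊗ M ⟶ 𝟙_ C`. -/
structure MonDualData (C : Type u) [Category.{v} C] [MonoidalCategory C] where
  M : C
  Mv : C
  η : 𝟙_ C ⟶ M ⊗ Mv
  ε : Mv ⊗ M ⟶ 𝟙_ C

/-- The two triangle identities, saying that `(M, Mv, η, ε)` is a dual pair. -/
def MonDualData.IsDualPair {C : Type u} [Category.{v} C] [MonoidalCategory C]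
    (D : MonDualData C) : Prop :=
  ((λ_ D.M).inv ≫ (D.η ▷ D.M) ≫ (α_ D.M D.Mv D.M).hom ≫ (D.M ◁ D.ε) ≫ (ρ_ D.M).hom
      = 𝟙 D.M) ∧
  ((ρ_ D.Mv).inv ≫ (D.Mv ◁ D.η) ≫ (α_ D.Mv D.M D.Mv).inv ≫ (D.ε ▷ D.Mv) ≫ (λ_ D.Mv).hom
      = 𝟙 D.Mv)

/-- The trace of `f : Q ⊗ M ⟶ M ⊗ P` with respect to a (candidate) dual pair for `M`,
in a symmetric monoidal category. -/
def mtrace {C : Type u} [Category.{v} C] [MonoidalCategory C] [SymmetricCategory C]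
    (D : MonDualData C) {Q P : C} (f : Q ⊗ D.M ⟶ D.M ⊗ P) : Q ⟶ P :=
  (ρ_ Q).inv ≫ (Q ◁ D.η) ≫ (α_ Q D.M D.Mv).inv ≫ (f ▷ D.Mv) ≫
    (β_ (D.M ⊗ P) D.Mv).hom ≫ (α_ D.Mv D.M P).inv ≫ (D.ε ▷ P) ≫ (λ_ P).hom

/-!
Factor `g` through the evaluation of `N`: `g = u ▷ N ≫ (α_ _ _ _).hom ≫ _ ◁ ε_N ≫ (ρ_ _).hom`
for some `u : K ⟶ (M ⊗ L) ⊗ N∨`. On the left-hand side the traced wire `M` then runs from `u`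
straight into `f`, so by naturality of the trace everything reduces to the generalized yanking
`tr (α_ M R M).hom = (β_ M R).hom`, a consequence of the triangle identity of the swapped pair
`(M∨, M)`. On the right-hand side the traced wire `N` runs straight into `ε_N`, and the second
triangle identity of `N` removes the loop. What remains on both sides is the same string diagram
built from `u`, `f` and `ε_N`, with the wires permuted in the same way.
-/

open BraidedCategory

namespace MonDualData

variable {C : Type u} [Category.{v} C] [MonoidalCategory C]

abbrev IsDualPair.exactPairing {D : MonDualData C} (h : D.IsDualPair) :
    ExactPairing D.M D.Mv where
  coevaluation' := D.η
  evaluation' := D.ε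
  coevaluation_evaluation' := by
    rw [← cancel_epi (ρ_ D.Mv).inv, ← cancel_mono (λ_ D.Mv).hom]
    simpa using h.2
  evaluation_coevaluation' := by
    rw [← cancel_epi (λ_ D.M).inv, ← cancel_mono (ρ_ D.M).hom]
    simpa using h.1

theorem IsDualPair.exists_eq_whiskerRight_comp_evaluation {D : MonDualData C}
    (h : D.IsDualPair) {K Z : C} (g : K ⊗ D.M ⟶ Z) :
    ∃ u : K ⟶ Z ⊗ D.Mv, g = u ▷ D.M ≫ (α_ Z D.Mv D.M).hom ≫ Z ◁ D.ε ≫ (ρ_ Z).hom :=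
  let _ := h.exactPairing
  ⟨_, ((tensorRightHomEquiv K D.M D.Mv Z).left_inv g).symm⟩

theorem IsDualPair.coevaluation_evaluation_swap [SymmetricCategory C] {D : MonDualData C}
    (h : D.IsDualPair) :
    D.M ◁ (D.η ≫ (β_ D.M D.Mv).hom) ≫ (α_ D.M D.Mv D.M).inv ≫
      ((β_ D.M D.Mv).hom ≫ D.ε) ▷ D.M = (ρ_ D.M).hom ≫ (λ_ D.M).inv := by
  let _ := h.exactPairing
  nth_rw 1 [SymmetricCategory.braiding_swap_eq_inv_braiding D.Mv D.M]
  exact (exactPairing_swap D.M D.Mv).coevaluation_evaluation'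

end MonDualData

section

variable {C : Type u} [Category.{v} C] [MonoidalCategory C] [SymmetricCategory C]

theorem whiskerLeft_comp_braiding_whiskerRight (X : C) {Y Z : C} (u : 𝟙_ C ⟶ Y ⊗ Z) :
    X ◁ u ≫ (α_ X Y Z).inv ≫ (β_ X Y).hom ▷ Z =
      (ρ_ X).hom ≫ (λ_ X).inv ≫ u ▷ X ≫ (α_ Y Z X).hom ≫ Y ◁ (β_ Z X).hom ≫
        (α_ Y X Z).inv := by
  have h := braiding_naturality_right X u
  rw [braiding_tensor_right_hom, braiding_tensorUnit_right] at h
  rw [← cancel_mono ((α_ Y X Z).hom ≫ Y ◁ (β_ X Z).hom ≫ (α_ Y Z X).inv)]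
  simp only [assoc]
  rw [h, Iso.inv_hom_id_assoc, ← whiskerLeft_comp_assoc, SymmetricCategory.symmetry,
    whiskerLeft_id, id_comp, Iso.hom_inv_id, comp_id, assoc]

theorem braiding_tensor_left_comp_braiding_tensor_left (X Y Z : C) :
    (α_ X Y Z).inv ≫ (β_ (X ⊗ Y) Z).hom ≫ (α_ Z X Y).inv ≫ (β_ (Z ⊗ X) Y).hom =
      (β_ X (Y ⊗ Z)).hom ≫ (α_ Y Z X).hom := by
  calc
    _ = 𝟙 _ ⊗≫ (X ◁ (β_ Y Z).hom ≫ (β_ X (Z ⊗ Y)).hom) ⊗≫ (β_ Z Y).hom ▷ X ⊗≫ 𝟙 _ := by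
      rw [braiding_tensor_left_hom, braiding_tensor_left_hom, braiding_tensor_right_hom]
      monoidal
    _ = 𝟙 _ ⊗≫ (β_ X (Y ⊗ Z)).hom ⊗≫ ((β_ Y Z).hom ≫ (β_ Z Y).hom) ▷ X ⊗≫ 𝟙 _ := by
      rw [braiding_naturality_right]
      monoidal
    _ = _ := by
      rw [SymmetricCategory.symmetry]
      monoidal

theorem cyclic_braid_rearrangement {K Q M L W N P : C} (u : K ⟶ (M ⊗ L) ⊗ W)
    (f : Q ⊗ M ⟶ N ⊗ P) (e : W ⊗ N ⟶ 𝟙_ C) :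
    u ▷ Q ⊗≫ (β_ M (L ⊗ (W ⊗ Q))).hom ⊗≫ L ◁ (W ◁ f ⊗≫ e ▷ P) ⊗≫ 𝟙 _ =
      (β_ K Q).hom ≫ (Q ◁ u ⊗≫ (f ▷ L) ▷ W ⊗≫ (β_ (N ⊗ (P ⊗ L)) W).hom ⊗≫
        e ▷ (P ⊗ L) ⊗≫ 𝟙 _) ≫ (β_ P L).hom := by
  let h : (W ⊗ Q) ⊗ M ⟶ P := (α_ W Q M).hom ≫ W ◁ f ≫ (α_ W N P).inv ≫ e ▷ P ≫ (λ_ P).hom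
  symm
  calc
    _ = ((β_ K Q).hom ≫ Q ◁ u) ⊗≫
          (((α_ Q M L).inv ≫ f ▷ L ≫ (α_ N P L).hom) ▷ W ≫ (β_ (N ⊗ (P ⊗ L)) W).hom) ⊗≫
          e ▷ (P ⊗ L) ⊗≫ (β_ P L).hom := by
      monoidal
    _ = u ▷ Q ⊗≫ (β_ ((M ⊗ L) ⊗ W) Q).hom ⊗≫ (β_ (Q ⊗ (M ⊗ L)) W).hom ⊗≫
          (h ▷ L ≫ (β_ P L).hom) := by
      rw [← braiding_naturality_left,
        braiding_naturality_left ((α_ Q M L).inv ≫ f ▷ L ≫ (α_ N P L).hom)]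
      monoidal
    _ = u ▷ Q ⊗≫ ((α_ (M ⊗ L) W Q).inv ≫ (β_ ((M ⊗ L) ⊗ W) Q).hom ≫
          (α_ Q (M ⊗ L) W).inv ≫ (β_ (Q ⊗ (M ⊗ L)) W).hom) ⊗≫
          (β_ ((W ⊗ Q) ⊗ M) L).hom ⊗≫ L ◁ h := by
      rw [braiding_naturality_left]
      monoidal
    _ = u ▷ Q ⊗≫ ((α_ M L (W ⊗ Q)).inv ≫ (β_ (M ⊗ L) (W ⊗ Q)).hom ≫
          (α_ (W ⊗ Q) M L).inv ≫ (β_ ((W ⊗ Q) ⊗ M) L).hom) ⊗≫ L ◁ h := by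
      rw [braiding_tensor_left_comp_braiding_tensor_left]
      monoidal
    _ = _ := by
      rw [braiding_tensor_left_comp_braiding_tensor_left]
      monoidal

theorem mtrace_whiskerRight_comp (D : MonDualData C) {Q' Q P : C} (a : Q' ⟶ Q)
    (f : Q ⊗ D.M ⟶ D.M ⊗ P) : mtrace D (a ▷ D.M ≫ f) = a ≫ mtrace D f := by
  simp only [mtrace, comp_whiskerRight, assoc, associator_inv_naturality_left_assoc,
    ← whisker_exchange_assoc, rightUnitor_inv_naturality_assoc]

theorem mtrace_comp_whiskerLeft (D : MonDualData C) {Q P P' : C} (f : Q ⊗ D.M ⟶ D.M ⊗ P)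
    (b : P ⟶ P') : mtrace D (f ≫ D.M ◁ b) = mtrace D f ≫ b := by
  simp only [mtrace, comp_whiskerRight, assoc, braiding_naturality_left_assoc,
    associator_inv_naturality_right_assoc, whisker_exchange_assoc, leftUnitor_naturality]

theorem MonDualData.IsDualPair.mtrace_associator_hom {D : MonDualData C} (h : D.IsDualPair)
    (R : C) : mtrace D (α_ D.M R D.M).hom = (β_ D.M R).hom := by
  obtain ⟨M, V, η, ε⟩ := D
  calc
    _ = 𝟙 _ ⊗≫ M ◁ (R ◁ (η ≫ (β_ M V).hom) ≫ (α_ R V M).inv ≫ (β_ R V).hom ▷ M) ⊗≫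
          ((β_ M V).hom ≫ ε) ▷ (R ⊗ M) ⊗≫ 𝟙 _ := by
      simp only [mtrace, braiding_tensor_left_hom]
      monoidal
    _ = 𝟙 _ ⊗≫ M ◁ ((η ≫ (β_ M V).hom) ▷ R) ⊗≫
          ((M ⊗ V) ◁ (β_ M R).hom ≫ ((β_ M V).hom ≫ ε) ▷ (R ⊗ M)) ⊗≫ 𝟙 _ := by
      rw [whiskerLeft_comp_braiding_whiskerRight]
      monoidal
    _ = 𝟙 _ ⊗≫ (M ◁ (η ≫ (β_ M V).hom) ≫ (α_ M V M).inv ≫ ((β_ M V).hom ≫ ε) ▷ M) ▷ R ⊗≫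
          (β_ M R).hom := by
      rw [whisker_exchange]
      monoidal
    _ = _ := by
      rw [h.coevaluation_evaluation_swap]
      monoidal

theorem MonDualData.IsDualPair.mtrace_associator_comp_evaluation {D : MonDualData C}
    (h : D.IsDualPair) {X P : C} (d : X ⟶ D.M ⊗ P) :
    mtrace D ((α_ X D.Mv D.M).hom ≫ X ◁ D.ε ≫ (ρ_ X).hom ≫ d) =
      d ▷ D.Mv ≫ (β_ (D.M ⊗ P) D.Mv).hom ≫ (α_ D.Mv D.M P).inv ≫ D.ε ▷ P ≫ (λ_ P).hom := by
  calc
    _ = X ◁ ((ρ_ D.Mv).inv ≫ D.Mv ◁ D.η ≫ (α_ D.Mv D.M D.Mv).inv ≫ D.ε ▷ D.Mv ≫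
          (λ_ D.Mv).hom) ⊗≫ d ▷ D.Mv ≫ (β_ (D.M ⊗ P) D.Mv).hom ≫ (α_ D.Mv D.M P).inv ≫
          D.ε ▷ P ≫ (λ_ P).hom := by
      simp only [mtrace, comp_whiskerRight]
      monoidal
    _ = _ := by
      rw [h.2]
      monoidal

end

/-- Cyclicity of the symmetric monoidal trace:
`tr((g ⊗ id_P) ∘ (id_K ⊗ f)) = tr((id_N ⊗ s) ∘ (f ⊗ id_L) ∘ (id_Q ⊗ g) ∘ (s ⊗ id_N))`,
the left trace taken with respect to `(M, M∨)` and the right one with respect to `(N, N∨)`. -/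
theorem mtrace_cyclicity {C : Type u} [Category.{v} C] [MonoidalCategory C]
    [SymmetricCategory C] (DM DN : MonDualData C)
    (hM : DM.IsDualPair) (hN : DN.IsDualPair) {Q P K L : C}
    (f : Q ⊗ DM.M ⟶ DN.M ⊗ P) (g : K ⊗ DN.M ⟶ DM.M ⊗ L) :
    mtrace DM ((α_ K Q DM.M).hom ≫ (K ◁ f) ≫ (α_ K DN.M P).inv ≫ (g ▷ P) ≫
        (α_ DM.M L P).hom)
      = mtrace DN (((β_ K Q).hom ▷ DN.M) ≫ (α_ Q K DN.M).hom ≫ (Q ◁ g) ≫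
          (α_ Q DM.M L).inv ≫ (f ▷ L) ≫ (α_ DN.M P L).hom ≫ (DN.M ◁ (β_ P L).hom)) := by
  obtain ⟨u, rfl⟩ := hN.exists_eq_whiskerRight_comp_evaluation g
  obtain ⟨M, V, η, ε⟩ := DM
  obtain ⟨N, W, θ, δ⟩ := DN
  dsimp only at f u ⊢
  calc
    _ = mtrace ⟨M, V, η, ε⟩ ((u ▷ Q ⊗≫ 𝟙 (M ⊗ (L ⊗ (W ⊗ Q)))) ▷ M ≫ (α_ M _ M).hom ≫
          M ◁ (𝟙 _ ⊗≫ L ◁ (W ◁ f ⊗≫ δ ▷ P) ⊗≫ 𝟙 _)) := by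
      congr 1
      calc
        _ = 𝟙 _ ⊗≫ (K ◁ f ≫ u ▷ (N ⊗ P)) ⊗≫ (M ⊗ L) ◁ (δ ▷ P) ⊗≫ 𝟙 _ := by monoidal
        _ = _ := by rw [whisker_exchange]; monoidal
    _ = u ▷ Q ⊗≫ (β_ M (L ⊗ (W ⊗ Q))).hom ⊗≫ L ◁ (W ◁ f ⊗≫ δ ▷ P) ⊗≫ 𝟙 _ := by
      rw [mtrace_whiskerRight_comp, mtrace_comp_whiskerLeft, hM.mtrace_associator_hom]
      simp [monoidalComp]
    _ = (β_ K Q).hom ≫ (Q ◁ u ⊗≫ (f ▷ L) ▷ W ⊗≫ (β_ (N ⊗ (P ⊗ L)) W).hom ⊗≫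
          δ ▷ (P ⊗ L) ⊗≫ 𝟙 _) ≫ (β_ P L).hom :=
      cyclic_braid_rearrangement u f δ
    _ = mtrace ⟨N, W, θ, δ⟩ ((β_ K Q).hom ▷ N ≫ ((Q ◁ u ⊗≫ 𝟙 ((Q ⊗ (M ⊗ L)) ⊗ W)) ▷ N ≫
          (α_ _ W N).hom ≫ _ ◁ δ ≫ (ρ_ _).hom ≫ (α_ Q M L).inv ≫ f ▷ L ≫ (α_ N P L).hom) ≫
          N ◁ (β_ P L).hom) := by
      rw [mtrace_whiskerRight_comp, mtrace_comp_whiskerLeft, mtrace_whiskerRight_comp,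
        hN.mtrace_associator_comp_evaluation]
      monoidal
    _ = _ := by
      congr 1
      monoidal
end

section
/- If (M, M∨, η_M, ε_M) and (N, N∨, η_N, ε_N) are dual pairs in a symmetric monoidal category C and f : M → N, g : N → M are morphisms, then tr(g ∘ f) = tr(f ∘ g) as morphisms I → I, where g ∘ f : M → M is regarded as a morphism I ⊗ M → M ⊗ I via the unitors (and similarly for f ∘ g), the first trace is taken with respect to (M, M∨) and the second with respect to (N, N∨). -/
open CategoryTheory Category MonoidalCategory

universe v u v' u'

namespace MonDualData

variable {C : Type u} [Category.{v} C] [MonoidalCategory C]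

abbrev IsDualPair.toExactPairing {D : MonDualData C} (hD : D.IsDualPair) :
    ExactPairing D.M D.Mv where
  coevaluation' := D.η
  evaluation' := D.ε
  coevaluation_evaluation' := by
    have h := hD.2
    rw [← cancel_epi (ρ_ D.Mv).hom, ← cancel_mono (λ_ D.Mv).inv] at h
    simpa using h
  evaluation_coevaluation' := by
    have h := hD.1
    rw [← cancel_epi (λ_ D.M).hom, ← cancel_mono (ρ_ D.M).inv] at h
    simpa using h

abbrev IsDualPair.hasRightDual {D : MonDualData C} (hD : D.IsDualPair) : HasRightDual D.M :=
  letI := hD.toExactPairing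
  ⟨D.Mv⟩

def endTrace [BraidedCategory C] (D : MonDualData C) (h : D.M ⟶ D.M) : 𝟙_ C ⟶ 𝟙_ C :=
  D.η ≫ h ▷ D.Mv ≫ (β_ D.M D.Mv).hom ≫ D.ε

/-- Slide `f` around the loop: across the coevaluation it becomes its mate `fᘁ` on the dual,
passes through the braiding, and returns as `f` across the evaluation. -/
theorem coevaluation_whiskerRight_braiding_evaluation_comp_comm [BraidedCategory C] {X Y : C}
    [HasRightDual X] [HasRightDual Y] (f : X ⟶ Y) (g : Y ⟶ X) :
    η_ X Xᘁ ≫ (f ≫ g) ▷ Xᘁ ≫ (β_ X Xᘁ).hom ≫ ε_ X Xᘁ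
      = η_ Y Yᘁ ≫ (g ≫ f) ▷ Yᘁ ≫ (β_ Y Yᘁ).hom ≫ ε_ Y Yᘁ :=
  calc η_ X Xᘁ ≫ (f ≫ g) ▷ Xᘁ ≫ (β_ X Xᘁ).hom ≫ ε_ X Xᘁ
      = η_ X Xᘁ ≫ f ▷ Xᘁ ≫ g ▷ Xᘁ ≫ (β_ X Xᘁ).hom ≫ ε_ X Xᘁ := by
        rw [comp_whiskerRight, assoc]
    _ = η_ Y Yᘁ ≫ Y ◁ fᘁ ≫ g ▷ Xᘁ ≫ (β_ X Xᘁ).hom ≫ ε_ X Xᘁ := by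
        rw [← coevaluation_comp_rightAdjointMate_assoc f]
    _ = η_ Y Yᘁ ≫ g ▷ Yᘁ ≫ X ◁ fᘁ ≫ (β_ X Xᘁ).hom ≫ ε_ X Xᘁ := by
        rw [← whisker_exchange_assoc]
    _ = η_ Y Yᘁ ≫ g ▷ Yᘁ ≫ (β_ X Yᘁ).hom ≫ fᘁ ▷ X ≫ ε_ X Xᘁ := by
        rw [BraidedCategory.braiding_naturality_right_assoc]
    _ = η_ Y Yᘁ ≫ g ▷ Yᘁ ≫ (β_ X Yᘁ).hom ≫ Yᘁ ◁ f ≫ ε_ Y Yᘁ := by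
        rw [rightAdjointMate_comp_evaluation]
    _ = η_ Y Yᘁ ≫ (g ≫ f) ▷ Yᘁ ≫ (β_ Y Yᘁ).hom ≫ ε_ Y Yᘁ := by
        simp only [comp_whiskerRight, assoc, BraidedCategory.braiding_naturality_left_assoc]

theorem endTrace_comp_comm [BraidedCategory C] {DM DN : MonDualData C}
    (hM : DM.IsDualPair) (hN : DN.IsDualPair) (f : DM.M ⟶ DN.M) (g : DN.M ⟶ DM.M) :
    DM.endTrace (f ≫ g) = DN.endTrace (g ≫ f) :=
  let := hM.hasRightDual
  let := hN.hasRightDual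
  coevaluation_whiskerRight_braiding_evaluation_comp_comm f g

theorem mtrace_unitors_conj [SymmetricCategory C] (D : MonDualData C) (h : D.M ⟶ D.M) :
    mtrace D ((λ_ D.M).hom ≫ h ≫ (ρ_ D.M).inv) = D.endTrace h := by
  simp only [mtrace, endTrace, comp_whiskerRight, assoc]
  slice_lhs 6 7 => rw [BraidedCategory.braiding_naturality_left]
  monoidal

end MonDualData

/-- Commutativity of the symmetric monoidal trace: for dual pairs `(M, M∨)` and `(N, N∨)` and
morphisms `f : M ⟶ N`, `g : N ⟶ M`, one has `tr(g ∘ f) = tr(f ∘ g) : I ⟶ I`, where `g ∘ f`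
is regarded as a morphism `I ⊗ M ⟶ M ⊗ I` via the unitors (and similarly for `f ∘ g`),
the first trace taken with respect to `(M, M∨)` and the second with respect to `(N, N∨)`. -/
theorem mtrace_comm {C : Type u} [Category.{v} C] [MonoidalCategory C]
    [SymmetricCategory C] (DM DN : MonDualData C)
    (hM : DM.IsDualPair) (hN : DN.IsDualPair)
    (f : DM.M ⟶ DN.M) (g : DN.M ⟶ DM.M) :
    mtrace DM ((λ_ DM.M).hom ≫ (f ≫ g) ≫ (ρ_ DM.M).inv)
      = mtrace DN ((λ_ DN.M).hom ≫ (g ≫ f) ≫ (ρ_ DN.M).inv) := by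
  rw [MonDualData.mtrace_unitors_conj, MonDualData.mtrace_unitors_conj]
  exact MonDualData.endTrace_comp_comm hM hN f g
end

section
/- Functoriality of the symmetric monoidal trace: Let F : C → D be a normal lax symmetric monoidal functor, let (M, M∨, η, ε) be a dual pair in C with c_{M,M∨} : F(M) ⊗ F(M∨) → F(M ⊗ M∨) invertible, let f : Q ⊗ M → M ⊗ P be a morphism in C, and assume c_{M,P} : F(M) ⊗ F(P) → F(M ⊗ P) is invertible. Then F(tr(f)) = tr(c_{M,P}⁻¹ ∘ F(f) ∘ c_{Q,M}) : F(Q) → F(P), where the left-hand trace is taken in C with respect to (M, M∨, η, ε) and the right-hand trace is taken in D with respect to the dual pair (F(M), F(M∨)) whose coevaluation is c_{M,M∨}⁻¹ ∘ F(η) ∘ i and whose evaluation is i⁻¹ ∘ F(ε) ∘ c_{M∨,M}. -/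
open CategoryTheory Category MonoidalCategory

universe v u v' u'

/-- A lax symmetric monoidal functor between symmetric monoidal categories: a functor `F`
together with structure morphisms `i : 𝟙_ D ⟶ F (𝟙_ C)` and
`c X Y : F X ⊗ F Y ⟶ F (X ⊗ Y)` (natural in `X` and `Y`), satisfying the associativity,
unit, and symmetry coherence axioms.  `F` is called normal when `i` is invertible. -/
structure LaxSymMonFunctor (C : Type u) (D : Type u') [Category.{v} C] [Category.{v'} D]
    [MonoidalCategory C] [MonoidalCategory D] [SymmetricCategory C] [SymmetricCategory D]
    extends C ⥤ D where
  i : 𝟙_ D ⟶ obj (𝟙_ C)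
  c : ∀ X Y : C, obj X ⊗ obj Y ⟶ obj (X ⊗ Y)
  c_natural : ∀ {X X' Y Y' : C} (f : X ⟶ X') (g : Y ⟶ Y'),
    (map f ⊗ₘ map g) ≫ c X' Y' = c X Y ≫ map (f ⊗ₘ g)
  associativity : ∀ X Y Z : C,
    (c X Y ▷ obj Z) ≫ c (X ⊗ Y) Z ≫ map (α_ X Y Z).hom =
      (α_ (obj X) (obj Y) (obj Z)).hom ≫ (obj X ◁ c Y Z) ≫ c X (Y ⊗ Z)
  left_unitality : ∀ X : C,
    (λ_ (obj X)).hom = (i ▷ obj X) ≫ c (𝟙_ C) X ≫ map (λ_ X).hom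
  right_unitality : ∀ X : C,
    (ρ_ (obj X)).hom = (obj X ◁ i) ≫ c X (𝟙_ C) ≫ map (ρ_ X).hom
  symmetry : ∀ X Y : C,
    (β_ (obj X) (obj Y)).hom ≫ c Y X = c X Y ≫ map (β_ X Y).hom

/-- The induced duality data on `(F M, F M∨)` for a normal lax symmetric monoidal functor `F`
with `c_{M,M∨}` invertible: the coevaluation is `c_{M,M∨}⁻¹ ∘ F(η) ∘ i` and the evaluation is
`i⁻¹ ∘ F(ε) ∘ c_{M∨,M}`. -/
noncomputable abbrev LaxSymMonFunctor.inducedData {C : Type u} {D : Type u'} [Category.{v} C]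
    [Category.{v'} D] [MonoidalCategory C] [MonoidalCategory D] [SymmetricCategory C]
    [SymmetricCategory D] (F : LaxSymMonFunctor C D) (Dp : MonDualData C)
    [IsIso F.i] [IsIso (F.c Dp.M Dp.Mv)] : MonDualData D where
  M := F.obj Dp.M
  Mv := F.obj Dp.Mv
  η := F.i ≫ F.map Dp.η ≫ inv (F.c Dp.M Dp.Mv)
  ε := F.c Dp.Mv Dp.M ≫ F.map Dp.ε ≫ inv F.i

/-!
Apply `F` to the composite defining `tr f` and push the structure maps `c` and `i` through it
from left to right: naturality of `c` carries them past `F(η)`, `F(f)` and `F(ε)`, while the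
associativity, unit and symmetry axioms turn `F` of each associator, unitor and braiding into
the corresponding map of `D`, conjugated by `c`. The conjugating inverses of `c_{M,M∨}` and
`i` are absorbed into the induced coevaluation and evaluation, and the copies of `c_{M,P}`
and its inverse cancel.
-/

namespace LaxSymMonFunctor

variable {C : Type u} {D : Type u'} [Category.{v} C] [Category.{v'} D] [MonoidalCategory C]
  [MonoidalCategory D] [SymmetricCategory C] [SymmetricCategory D] (F : LaxSymMonFunctor C D)

theorem map_rightUnitor_inv (X : C) :
    F.map (ρ_ X).inv = (ρ_ (F.obj X)).inv ≫ (F.obj X ◁ F.i) ≫ F.c X (𝟙_ C) := by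
  rw [Iso.eq_inv_comp, F.right_unitality X, assoc, assoc, ← F.map_comp, Iso.hom_inv_id,
    F.map_id, comp_id]

theorem c_map_leftUnitor_hom [IsIso F.i] (X : C) :
    F.c (𝟙_ C) X ≫ F.map (λ_ X).hom = (inv F.i ▷ F.obj X) ≫ (λ_ (F.obj X)).hom := by
  rw [F.left_unitality X, inv_hom_whiskerRight'_assoc]

theorem c_map_whiskerLeft (X : C) {Y Y' : C} (g : Y ⟶ Y') :
    F.c X Y ≫ F.map (X ◁ g) = (F.obj X ◁ F.map g) ≫ F.c X Y' := by
  simpa using (F.c_natural (𝟙 X) g).symm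

theorem c_map_whiskerRight {X X' : C} (f : X ⟶ X') (Y : C) :
    F.c X Y ≫ F.map (f ▷ Y) = (F.map f ▷ F.obj Y) ≫ F.c X' Y := by
  simpa using (F.c_natural f (𝟙 Y)).symm

theorem c_map_associator_inv (X Y Z : C) [IsIso (F.c Y Z)] :
    F.c X (Y ⊗ Z) ≫ F.map (α_ X Y Z).inv
      = (F.obj X ◁ inv (F.c Y Z)) ≫ (α_ (F.obj X) (F.obj Y) (F.obj Z)).inv ≫
        (F.c X Y ▷ F.obj Z) ≫ F.c (X ⊗ Y) Z := by
  rw [← cancel_epi (F.obj X ◁ F.c Y Z), whiskerLeft_hom_inv'_assoc,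
    ← cancel_epi (α_ (F.obj X) (F.obj Y) (F.obj Z)).hom, Iso.hom_inv_id_assoc,
    ← reassoc_of% (F.associativity X Y Z), ← F.map_comp, Iso.hom_inv_id, F.map_id, comp_id]

theorem c_map_braiding_hom (X Y Z : C) [IsIso (F.c X Y)] :
    F.c (X ⊗ Y) Z ≫ F.map (β_ (X ⊗ Y) Z).hom
      = (inv (F.c X Y) ▷ F.obj Z) ≫ (β_ (F.obj X ⊗ F.obj Y) (F.obj Z)).hom ≫
        (F.obj Z ◁ F.c X Y) ≫ F.c Z (X ⊗ Y) := by
  rw [← F.symmetry, ← BraidedCategory.braiding_naturality_left_assoc,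
    inv_hom_whiskerRight'_assoc]

end LaxSymMonFunctor

theorem laxSymMonFunctor_preserves_trace_general {C : Type u} {D : Type u'} [Category.{v} C]
    [Category.{v'} D] [MonoidalCategory C] [MonoidalCategory D] [SymmetricCategory C]
    [SymmetricCategory D] (F : LaxSymMonFunctor C D) [IsIso F.i]
    (Dp : MonDualData C) [IsIso (F.c Dp.M Dp.Mv)]
    {Q P : C} (f : Q ⊗ Dp.M ⟶ Dp.M ⊗ P) [IsIso (F.c Dp.M P)] :
    F.map (mtrace Dp f)
      = mtrace (F.inducedData Dp) (F.c Q Dp.M ≫ F.map f ≫ inv (F.c Dp.M P)) := by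
  simp only [mtrace, Functor.map_comp]
  rw [F.map_rightUnitor_inv, assoc, assoc, reassoc_of% (F.c_map_whiskerLeft Q Dp.η),
    reassoc_of% (F.c_map_associator_inv Q Dp.M Dp.Mv),
    reassoc_of% (F.c_map_whiskerRight f Dp.Mv), reassoc_of% (F.c_map_braiding_hom Dp.M P Dp.Mv),
    reassoc_of% (F.c_map_associator_inv Dp.Mv Dp.M P),
    reassoc_of% (F.c_map_whiskerRight Dp.ε P), F.c_map_leftUnitor_hom]
  simp only [whiskerLeft_comp, comp_whiskerRight, assoc, whiskerLeft_hom_inv'_assoc]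

/-- Functoriality of the symmetric monoidal trace: for a normal lax symmetric monoidal
functor `F`, a dual pair `(M, M∨, η, ε)` with `c_{M,M∨}` invertible, and a morphism
`f : Q ⊗ M ⟶ M ⊗ P` with `c_{M,P}` invertible,
`F(tr f) = tr(c_{M,P}⁻¹ ∘ F(f) ∘ c_{Q,M})`, the right-hand trace being taken with respect
to the induced dual pair `(F M, F M∨)`. -/
theorem laxSymMonFunctor_preserves_trace {C : Type u} {D : Type u'} [Category.{v} C]
    [Category.{v'} D] [MonoidalCategory C] [MonoidalCategory D] [SymmetricCategory C]
    [SymmetricCategory D] (F : LaxSymMonFunctor C D) [IsIso F.i]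
    (Dp : MonDualData C) (hDp : Dp.IsDualPair) [IsIso (F.c Dp.M Dp.Mv)]
    {Q P : C} (f : Q ⊗ Dp.M ⟶ Dp.M ⊗ P) [IsIso (F.c Dp.M P)] :
    F.map (mtrace Dp f)
      = mtrace (F.inducedData Dp) (F.c Q Dp.M ≫ F.map f ≫ inv (F.c Dp.M P)) :=
  laxSymMonFunctor_preserves_trace_general F Dp f
end

section
/- Duals invert monoidal natural transformations: Let F, G : C → D be normal lax symmetric monoidal functors, let α : F → G be a monoidal natural transformation, and let (M, M∨, η, ε) be a dual pair in C such that c^F_{M,M∨} and c^G_{M,M∨} are invertible. Then α_M : F(M) → G(M) is an isomorphism, whose inverse is the mate of α_{M∨}: the composite G(M) ≅ I_D ⊗ G(M) → (F(M) ⊗ F(M∨)) ⊗ G(M) → (F(M) ⊗ G(M∨)) ⊗ G(M) ≅ F(M) ⊗ (G(M∨) ⊗ G(M)) → F(M) ⊗ I_D ≅ F(M), where the second arrow uses the coevaluation of the induced dual pair (F(M), F(M∨)), the third is (id ⊗ α_{M∨}) ⊗ id, and the fifth uses the evaluation of the induced dual pair (G(M), G(M∨)). -/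
open CategoryTheory Category MonoidalCategory

universe v u v' u'

/-- A monoidal natural transformation between lax symmetric monoidal functors:
a natural transformation compatible with the structure morphisms `c` and `i`. -/
structure MonNatTrans {C : Type u} {D : Type u'} [Category.{v} C] [Category.{v'} D]
    [MonoidalCategory C] [MonoidalCategory D] [SymmetricCategory C] [SymmetricCategory D]
    (F G : LaxSymMonFunctor C D) where
  app : ∀ X : C, F.obj X ⟶ G.obj X
  naturality : ∀ {X Y : C} (f : X ⟶ Y), F.map f ≫ app Y = app X ≫ G.map f
  unit : F.i ≫ app (𝟙_ C) = G.i
  tensor : ∀ X Y : C, F.c X Y ≫ app (X ⊗ Y) = (app X ⊗ₘ app Y) ≫ G.c X Y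

/-- The mate of `α_{M∨}`: the composite
`G(M) ≅ I ⊗ G(M) ⟶ (F(M) ⊗ F(M∨)) ⊗ G(M) ⟶ (F(M) ⊗ G(M∨)) ⊗ G(M) ≅ F(M) ⊗ (G(M∨) ⊗ G(M))
⟶ F(M) ⊗ I ≅ F(M)`, using the coevaluation of the induced dual pair `(F M, F M∨)`,
the component `α_{M∨}`, and the evaluation of the induced dual pair `(G M, G M∨)`. -/
noncomputable def MonNatTrans.dualMate {C : Type u} {D : Type u'} [Category.{v} C]
    [Category.{v'} D] [MonoidalCategory C] [MonoidalCategory D] [SymmetricCategory C]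
    [SymmetricCategory D] {F G : LaxSymMonFunctor C D} (τ : MonNatTrans F G)
    (Dp : MonDualData C) [IsIso F.i] [IsIso G.i]
    [IsIso (F.c Dp.M Dp.Mv)] [IsIso (G.c Dp.M Dp.Mv)] :
    G.obj Dp.M ⟶ F.obj Dp.M :=
  (λ_ (G.obj Dp.M)).inv ≫ ((F.inducedData Dp).η ▷ G.obj Dp.M) ≫
    ((F.obj Dp.M ◁ τ.app Dp.Mv) ▷ G.obj Dp.M) ≫
    (α_ (F.obj Dp.M) (G.obj Dp.Mv) (G.obj Dp.M)).hom ≫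
    (F.obj Dp.M ◁ (G.inducedData Dp).ε) ≫ (ρ_ (F.obj Dp.M)).hom

/-
A normal lax monoidal functor carries the first triangle identity of `(M, M∨, η, ε)` over to the
induced pair, and monoidality of `τ` says that `τ_M ⊗ τ_{M∨}` carries the induced coevaluation of
`F` to that of `G`, while `τ_{M∨} ⊗ τ_M` carries the induced evaluation of `G` to that of `F`.
Given that, sliding `τ_M` through the zig-zag of the mate turns either composite into a triangle
identity.
-/

section Mate

variable {D : Type u'} [Category.{v'} D] [MonoidalCategory D]

def MonDualData.LeftTriangle (P : MonDualData D) : Prop :=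
  (λ_ P.M).inv ≫ (P.η ▷ P.M) ≫ (α_ P.M P.Mv P.M).hom ≫ (P.M ◁ P.ε) ≫ (ρ_ P.M).hom = 𝟙 P.M

def MonDualData.mate (P Q : MonDualData D) (g : P.Mv ⟶ Q.Mv) : Q.M ⟶ P.M :=
  (λ_ Q.M).inv ≫ (P.η ▷ Q.M) ≫ ((P.M ◁ g) ▷ Q.M) ≫ (α_ P.M Q.Mv Q.M).hom ≫ (P.M ◁ Q.ε) ≫
    (ρ_ P.M).hom

variable {P Q : MonDualData D} {f : P.M ⟶ Q.M} {g : P.Mv ⟶ Q.Mv}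

theorem MonDualData.comp_mate_eq_id (hP : P.LeftTriangle) (hε : (g ⊗ₘ f) ≫ Q.ε = P.ε) :
    f ≫ P.mate Q g = 𝟙 P.M := by
  calc f ≫ P.mate Q g
      = (λ_ P.M).inv ≫ (P.η ▷ P.M) ≫ ((P.M ◁ g) ▷ P.M) ≫ ((P.M ⊗ Q.Mv) ◁ f) ≫
          (α_ P.M Q.Mv Q.M).hom ≫ (P.M ◁ Q.ε) ≫ (ρ_ P.M).hom := by
        rw [mate, leftUnitor_inv_naturality_assoc, whisker_exchange_assoc,
          whisker_exchange_assoc (P.M ◁ g) f]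
    _ = (λ_ P.M).inv ≫ (P.η ▷ P.M) ≫ (α_ P.M P.Mv P.M).hom ≫ (P.M ◁ ((g ⊗ₘ f) ≫ Q.ε)) ≫
          (ρ_ P.M).hom := by
        rw [associator_naturality_right_assoc, associator_naturality_middle_assoc,
          MonoidalCategory.tensorHom_def, MonoidalCategory.whiskerLeft_comp,
          MonoidalCategory.whiskerLeft_comp]
        simp only [assoc]
    _ = 𝟙 P.M := by rw [hε, hP]

theorem MonDualData.mate_comp_eq_id (hQ : Q.LeftTriangle) (hη : P.η ≫ (f ⊗ₘ g) = Q.η) :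
    P.mate Q g ≫ f = 𝟙 Q.M := by
  calc P.mate Q g ≫ f
      = (λ_ Q.M).inv ≫ (P.η ▷ Q.M) ≫ ((P.M ◁ g) ▷ Q.M) ≫ ((f ▷ Q.Mv) ▷ Q.M) ≫
          (α_ Q.M Q.Mv Q.M).hom ≫ (Q.M ◁ Q.ε) ≫ (ρ_ Q.M).hom := by
        simp only [mate, assoc, ← rightUnitor_naturality, whisker_exchange_assoc,
          ← associator_naturality_left_assoc]
    _ = (λ_ Q.M).inv ≫ ((P.η ≫ (f ⊗ₘ g)) ▷ Q.M) ≫ (α_ Q.M Q.Mv Q.M).hom ≫ (Q.M ◁ Q.ε) ≫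
          (ρ_ Q.M).hom := by
        rw [tensorHom_def', comp_whiskerRight, comp_whiskerRight]
        simp only [assoc]
    _ = 𝟙 Q.M := by rw [hη, hQ]

end Mate

namespace LaxSymMonFunctor

variable {C : Type u} {D : Type u'} [Category.{v} C] [Category.{v'} D]
  [MonoidalCategory C] [MonoidalCategory D] [SymmetricCategory C] [SymmetricCategory D]
  (F : LaxSymMonFunctor C D)

theorem whiskerLeft_map_comp_c {X Y Y' : C} (g : Y ⟶ Y') :
    (F.obj X ◁ F.map g) ≫ F.c X Y' = F.c X Y ≫ F.map (X ◁ g) := by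
  simpa only [F.map_id, id_tensorHom] using F.c_natural (𝟙 X) g

theorem map_whiskerRight_comp_c {X X' Y : C} (f : X ⟶ X') :
    (F.map f ▷ F.obj Y) ≫ F.c X' Y = F.c X Y ≫ F.map (f ▷ Y) := by
  simpa only [F.map_id, tensorHom_id] using F.c_natural f (𝟙 Y)

theorem leftUnitor_inv_comp_c (X : C) :
    (λ_ (F.obj X)).inv ≫ (F.i ▷ F.obj X) ≫ F.c (𝟙_ C) X = F.map (λ_ X).inv := by
  rw [Iso.inv_comp_eq, F.left_unitality X, assoc, assoc, ← F.map_comp, Iso.hom_inv_id,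
    F.map_id, comp_id]

theorem whiskerLeft_inv_i_comp_rightUnitor [IsIso F.i] (X : C) :
    (F.obj X ◁ inv F.i) ≫ (ρ_ (F.obj X)).hom = F.c X (𝟙_ C) ≫ F.map (ρ_ X).hom := by
  rw [F.right_unitality X, ← assoc, ← MonoidalCategory.whiskerLeft_comp, IsIso.inv_hom_id,
    MonoidalCategory.whiskerLeft_id, id_comp]

theorem inv_c_whiskerRight_comp_associator (X Y Z : C) [IsIso (F.c X Y)] :
    (inv (F.c X Y) ▷ F.obj Z) ≫ (α_ (F.obj X) (F.obj Y) (F.obj Z)).hom ≫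
      (F.obj X ◁ F.c Y Z) ≫ F.c X (Y ⊗ Z) = F.c (X ⊗ Y) Z ≫ F.map (α_ X Y Z).hom := by
  rw [← F.associativity, ← comp_whiskerRight_assoc, IsIso.inv_hom_id, id_whiskerRight, id_comp]

theorem inducedData_leftTriangle (Dp : MonDualData C) (h : Dp.LeftTriangle)
    [IsIso F.i] [IsIso (F.c Dp.M Dp.Mv)] : (F.inducedData Dp).LeftTriangle := by
  obtain ⟨M, Mv, η, ε⟩ := Dp
  have hF : F.map ((λ_ M).inv ≫ (η ▷ M) ≫ (α_ M Mv M).hom ≫ (M ◁ ε) ≫ (ρ_ M).hom) =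
      𝟙 (F.obj M) := by
    rw [h, F.map_id]
  simp only [MonDualData.LeftTriangle, comp_whiskerRight, MonoidalCategory.whiskerLeft_comp,
    assoc, F.whiskerLeft_inv_i_comp_rightUnitor, reassoc_of% F.whiskerLeft_map_comp_c,
    reassoc_of% F.inv_c_whiskerRight_comp_associator, reassoc_of% F.map_whiskerRight_comp_c,
    reassoc_of% F.leftUnitor_inv_comp_c]
  simpa only [F.map_comp] using hF

end LaxSymMonFunctor

namespace MonNatTrans

variable {C : Type u} {D : Type u'} [Category.{v} C] [Category.{v'} D]
  [MonoidalCategory C] [MonoidalCategory D] [SymmetricCategory C] [SymmetricCategory D]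
  {F G : LaxSymMonFunctor C D} (τ : MonNatTrans F G) (Dp : MonDualData C)
  [IsIso F.i] [IsIso G.i] [IsIso (F.c Dp.M Dp.Mv)] [IsIso (G.c Dp.M Dp.Mv)]

theorem inducedData_η_comp_tensorHom :
    (F.inducedData Dp).η ≫ (τ.app Dp.M ⊗ₘ τ.app Dp.Mv) = (G.inducedData Dp).η := by
  have hc : inv (F.c Dp.M Dp.Mv) ≫ (τ.app Dp.M ⊗ₘ τ.app Dp.Mv) =
      τ.app (Dp.M ⊗ Dp.Mv) ≫ inv (G.c Dp.M Dp.Mv) := by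
    rw [IsIso.inv_comp_eq, reassoc_of% τ.tensor, IsIso.hom_inv_id, comp_id]
  simp only [LaxSymMonFunctor.inducedData, assoc, hc, reassoc_of% τ.naturality,
    reassoc_of% τ.unit]

theorem tensorHom_comp_inducedData_ε :
    (τ.app Dp.Mv ⊗ₘ τ.app Dp.M) ≫ (G.inducedData Dp).ε = (F.inducedData Dp).ε := by
  have hi : τ.app (𝟙_ C) ≫ inv G.i = inv F.i := by
    rw [IsIso.comp_inv_eq, ← τ.unit, IsIso.inv_hom_id_assoc]
  dsimp only [LaxSymMonFunctor.inducedData]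
  rw [← reassoc_of% τ.tensor, ← reassoc_of% τ.naturality, hi]

theorem dualMate_eq_mate :
    τ.dualMate Dp = (F.inducedData Dp).mate (G.inducedData Dp) (τ.app Dp.Mv) :=
  rfl

end MonNatTrans

/-- "Duals invert": for a monoidal natural transformation `α : F ⟶ G` between normal lax
symmetric monoidal functors and a dual pair `(M, M∨, η, ε)` with `c^F_{M,M∨}` and
`c^G_{M,M∨}` invertible, the component `α_M : F(M) ⟶ G(M)` is an isomorphism whose inverse
is the mate of `α_{M∨}`. -/
theorem monNatTrans_duals_invert {C : Type u} {D : Type u'} [Category.{v} C]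
    [Category.{v'} D] [MonoidalCategory C] [MonoidalCategory D] [SymmetricCategory C]
    [SymmetricCategory D] (F G : LaxSymMonFunctor C D) [IsIso F.i] [IsIso G.i]
    (τ : MonNatTrans F G) (Dp : MonDualData C) (hDp : Dp.IsDualPair)
    [IsIso (F.c Dp.M Dp.Mv)] [IsIso (G.c Dp.M Dp.Mv)] :
    τ.app Dp.M ≫ τ.dualMate Dp = 𝟙 (F.obj Dp.M) ∧
      τ.dualMate Dp ≫ τ.app Dp.M = 𝟙 (G.obj Dp.M) := by
  rw [τ.dualMate_eq_mate]
  constructor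
  · exact MonDualData.comp_mate_eq_id (Q := G.inducedData Dp)
      (F.inducedData_leftTriangle Dp hDp.1) (τ.tensorHom_comp_inducedData_ε Dp)
  · exact MonDualData.mate_comp_eq_id (P := F.inducedData Dp)
      (G.inducedData_leftTriangle Dp hDp.1) (τ.inducedData_η_comp_tensorHom Dp)
end

section
/- 2-functoriality of the symmetric monoidal trace: Let F, G : C → D be normal lax symmetric monoidal functors, α : F → G a monoidal natural transformation, (M, M∨, η, ε) a dual pair in C with c^F_{M,M∨} and c^G_{M,M∨} invertible, and f : Q ⊗ M → M ⊗ P a morphism with c^F_{M,P} and c^G_{M,P} invertible. Then α_P ∘ tr((c^F_{M,P})⁻¹ ∘ F(f) ∘ c^F_{Q,M}) = tr((c^G_{M,P})⁻¹ ∘ G(f) ∘ c^G_{Q,M}) ∘ α_Q as morphisms F(Q) → G(P), where the first trace is taken with respect to the induced dual pair (F(M), F(M∨)) and the second with respect to the induced dual pair (G(M), G(M∨)). -/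
open CategoryTheory Category MonoidalCategory

universe v u v' u'

/-! The comparison maps `c` and `i` of `F` can be pushed, one stage at a time, through the eight
stages of the trace of `f` (unit, coevaluation, associator, `f`, braiding, associator,
evaluation, unit), each step being one naturality or coherence axiom of `F`; hence `F` sends
`tr f` to the trace of the transported map with respect to the induced dual pair. The square is
then naturality of `α` at `tr f`. -/

namespace LaxSymMonFunctor

variable {C : Type u} {D : Type u'} [Category.{v} C] [Category.{v'} D]
  [MonoidalCategory C] [MonoidalCategory D] [SymmetricCategory C] [SymmetricCategory D]
  (F : LaxSymMonFunctor C D)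

theorem whiskerLeft_c_comp_map_associator_inv (X Y Z : C) :
    (F.obj X ◁ F.c Y Z) ≫ F.c X (Y ⊗ Z) ≫ F.map (α_ X Y Z).inv =
      (α_ (F.obj X) (F.obj Y) (F.obj Z)).inv ≫ (F.c X Y ▷ F.obj Z) ≫ F.c (X ⊗ Y) Z := by
  rw [← cancel_mono (F.map (α_ X Y Z).hom), assoc, assoc, ← F.map_comp, Iso.inv_hom_id,
    F.map_id, comp_id, assoc, assoc, F.associativity, Iso.inv_hom_id_assoc]

theorem whiskerRight_c_comp_map_braiding (X Y Z : C) :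
    (F.c X Y ▷ F.obj Z) ≫ F.c (X ⊗ Y) Z ≫ F.map (β_ (X ⊗ Y) Z).hom =
      (β_ (F.obj X ⊗ F.obj Y) (F.obj Z)).hom ≫ (F.obj Z ◁ F.c X Y) ≫ F.c Z (X ⊗ Y) := by
  rw [← F.symmetry, BraidedCategory.braiding_naturality_left_assoc]

theorem c_natural_whiskerLeft (X : C) {Y Z : C} (g : Y ⟶ Z) :
    (F.obj X ◁ F.map g) ≫ F.c X Z = F.c X Y ≫ F.map (X ◁ g) := by
  simpa using F.c_natural (𝟙 X) g

theorem c_natural_whiskerRight {X Y : C} (g : X ⟶ Y) (Z : C) :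
    (F.map g ▷ F.obj Z) ≫ F.c Y Z = F.c X Z ≫ F.map (g ▷ Z) := by
  simpa using F.c_natural g (𝟙 Z)

theorem whiskerLeft_comp_c_comp_map {A B : D} {Y Z : C} (a : A ⟶ F.obj Y) (b : B ⟶ F.obj Z)
    [IsIso b] (g : Y ⟶ Z) (X : C) :
    (F.obj X ◁ a) ≫ F.c X Y ≫ F.map (X ◁ g) =
      (F.obj X ◁ (a ≫ F.map g ≫ inv b)) ≫ (F.obj X ◁ b) ≫ F.c X Z := by
  simp [← F.c_natural_whiskerLeft]

theorem whiskerRight_comp_c_comp_map {A B : D} {X Y : C} (a : A ⟶ F.obj X) (b : B ⟶ F.obj Y)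
    [IsIso b] (g : X ⟶ Y) (Z : C) :
    (a ▷ F.obj Z) ≫ F.c X Z ≫ F.map (g ▷ Z) =
      ((a ≫ F.map g ≫ inv b) ▷ F.obj Z) ≫ (b ▷ F.obj Z) ≫ F.c Y Z := by
  simp [← F.c_natural_whiskerRight]

theorem map_mtrace [IsIso F.i] (Dp : MonDualData C) [IsIso (F.c Dp.M Dp.Mv)]
    {Q P : C} (f : Q ⊗ Dp.M ⟶ Dp.M ⊗ P) [IsIso (F.c Dp.M P)] :
    F.map (mtrace Dp f) =
      mtrace (F.inducedData Dp) (F.c Q Dp.M ≫ F.map f ≫ inv (F.c Dp.M P)) := by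
  simp only [mtrace, F.map_comp]
  rw [map_rightUnitor_inv, assoc, assoc,
    reassoc_of% (F.whiskerLeft_comp_c_comp_map _ (F.c Dp.M Dp.Mv)),
    reassoc_of% F.whiskerLeft_c_comp_map_associator_inv,
    reassoc_of% (F.whiskerRight_comp_c_comp_map _ (F.c Dp.M P)),
    reassoc_of% F.whiskerRight_c_comp_map_braiding,
    reassoc_of% F.whiskerLeft_c_comp_map_associator_inv,
    reassoc_of% (F.whiskerRight_comp_c_comp_map _ F.i), ← F.left_unitality]

end LaxSymMonFunctor

theorem monNatTrans_trace_square_general {C : Type u} {D : Type u'} [Category.{v} C]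
    [Category.{v'} D] [MonoidalCategory C] [MonoidalCategory D] [SymmetricCategory C]
    [SymmetricCategory D] (F G : LaxSymMonFunctor C D) [IsIso F.i] [IsIso G.i]
    (τ : MonNatTrans F G) (Dp : MonDualData C)
    [IsIso (F.c Dp.M Dp.Mv)] [IsIso (G.c Dp.M Dp.Mv)]
    {Q P : C} (f : Q ⊗ Dp.M ⟶ Dp.M ⊗ P) [IsIso (F.c Dp.M P)] [IsIso (G.c Dp.M P)] :
    mtrace (F.inducedData Dp) (F.c Q Dp.M ≫ F.map f ≫ inv (F.c Dp.M P)) ≫ τ.app P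
      = τ.app Q ≫ mtrace (G.inducedData Dp) (G.c Q Dp.M ≫ G.map f ≫ inv (G.c Dp.M P)) := by
  rw [← F.map_mtrace, ← G.map_mtrace, τ.naturality]

/-- 2-functoriality of the symmetric monoidal trace: for a monoidal natural transformation
`α : F ⟶ G` between normal lax symmetric monoidal functors, a dual pair `(M, M∨, η, ε)`
with `c^F_{M,M∨}`, `c^G_{M,M∨}` invertible, and `f : Q ⊗ M ⟶ M ⊗ P` with `c^F_{M,P}`,
`c^G_{M,P}` invertible, the square
`α_P ∘ tr((c^F_{M,P})⁻¹ ∘ F(f) ∘ c^F_{Q,M}) = tr((c^G_{M,P})⁻¹ ∘ G(f) ∘ c^G_{Q,M}) ∘ α_Q`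
commutes, the traces being taken with respect to the induced dual pairs. -/
theorem monNatTrans_trace_square {C : Type u} {D : Type u'} [Category.{v} C]
    [Category.{v'} D] [MonoidalCategory C] [MonoidalCategory D] [SymmetricCategory C]
    [SymmetricCategory D] (F G : LaxSymMonFunctor C D) [IsIso F.i] [IsIso G.i]
    (τ : MonNatTrans F G) (Dp : MonDualData C) (hDp : Dp.IsDualPair)
    [IsIso (F.c Dp.M Dp.Mv)] [IsIso (G.c Dp.M Dp.Mv)]
    {Q P : C} (f : Q ⊗ Dp.M ⟶ Dp.M ⊗ P) [IsIso (F.c Dp.M P)] [IsIso (G.c Dp.M P)] :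
    mtrace (F.inducedData Dp) (F.c Q Dp.M ≫ F.map f ≫ inv (F.c Dp.M P)) ≫ τ.app P
      = τ.app Q ≫ mtrace (G.inducedData Dp) (G.c Q Dp.M ≫ G.map f ≫ inv (G.c Dp.M P)) :=
  monNatTrans_trace_square_general F G τ Dp f
end

section
/- Involutivity of the shadow isomorphism: For any shadow ⟦−⟧ on a bicategory B and any 1-cells M : R → S and N : S → R, the composite ⟦M ⊙ N⟧ →θ_{M,N} ⟦N ⊙ M⟧ →θ_{N,M} ⟦M ⊙ N⟧ is the identity. -/
open CategoryTheory Category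

universe w v u w' v' u' v₁ u₁ v₂ u₂

/-- The data of a candidate dual pair in a bicategory (horizontal composition written in
diagrammatic order): 1-cells `M : R ⟶ S` and `Mv : S ⟶ R` together with a coevaluation
`η : 𝟙 R ⟶ M ≫ Mv` and an evaluation `ε : Mv ≫ M ⟶ 𝟙 S`. -/
structure BicatDualData {B : Type u} [Bicategory.{w, v} B] (R S : B) where
  M : R ⟶ S
  Mv : S ⟶ R
  η : 𝟙 R ⟶ M ≫ Mv
  ε : Mv ≫ M ⟶ 𝟙 S

open Bicategory

/-- The two triangle identities, saying that `(M, Mv, η, ε)` is a dual pair, i.e. that `M`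
is right dualizable with right dual `Mv`. -/
def BicatDualData.IsDualPair {B : Type u} [Bicategory.{w, v} B] {R S : B}
    (D : BicatDualData R S) : Prop :=
  ((λ_ D.M).inv ≫ (D.η ▷ D.M) ≫ (α_ D.M D.Mv D.M).hom ≫ (D.M ◁ D.ε) ≫ (ρ_ D.M).hom
      = 𝟙 D.M) ∧
  ((ρ_ D.Mv).inv ≫ (D.Mv ◁ D.η) ≫ (α_ D.Mv D.M D.Mv).inv ≫ (D.ε ▷ D.Mv) ≫ (λ_ D.Mv).hom
      = 𝟙 D.Mv)

/-- A shadow on a bicategory `B` with values in a category `V`: functors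
`⟦-⟧ : B(R,R) ⥤ V` for every 0-cell `R`, together with natural isomorphisms
`θ_{M,N} : ⟦M ≫ N⟧ ≅ ⟦N ≫ M⟧` satisfying the hexagon and unit axioms. -/
structure Shadow (B : Type u) [Bicategory.{w, v} B] (V : Type u₁) [Category.{v₁} V] where
  sh : ∀ R : B, (R ⟶ R) ⥤ V
  θ : ∀ {R S : B} (M : R ⟶ S) (N : S ⟶ R), (sh R).obj (M ≫ N) ≅ (sh S).obj (N ≫ M)
  θ_natural : ∀ {R S : B} {M M' : R ⟶ S} {N N' : S ⟶ R} (f : M ⟶ M') (g : N ⟶ N'),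
    (sh R).map (f ▷ N ≫ M' ◁ g) ≫ (θ M' N').hom
      = (θ M N).hom ≫ (sh S).map (g ▷ M ≫ N' ◁ f)
  hexagon : ∀ {R S T : B} (M : R ⟶ S) (N : S ⟶ T) (P : T ⟶ R),
    (θ (M ≫ N) P).hom ≫ (sh T).map (α_ P M N).inv
      = (sh R).map (α_ M N P).hom ≫ (θ M (N ≫ P)).hom ≫ (sh S).map (α_ N P M).hom ≫
          (θ N (P ≫ M)).hom
  unit_right : ∀ {R : B} (M : R ⟶ R),
    (θ M (𝟙 R)).hom ≫ (sh R).map (λ_ M).hom = (sh R).map (ρ_ M).hom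
  unit_left : ∀ {R : B} (M : R ⟶ R),
    (θ (𝟙 R) M).hom ≫ (sh R).map (ρ_ M).hom = (sh R).map (λ_ M).hom

/-- The bicategorical trace of a 2-cell `f : Q ≫ M ⟶ M ≫ P` (`Q : R ⟶ R`, `P : S ⟶ S`)
with respect to a (candidate) dual pair `(M, Mv, η, ε)`, relative to a shadow: the composite
`⟦Q⟧ ≅ ⟦Q ⊙ U_R⟧ → ⟦Q ⊙ (M ⊙ M∨)⟧ ≅ ⟦(Q ⊙ M) ⊙ M∨⟧ → ⟦(M ⊙ P) ⊙ M∨⟧ ≅θ ⟦M∨ ⊙ (M ⊙ P)⟧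
≅ ⟦(M∨ ⊙ M) ⊙ P⟧ → ⟦U_S ⊙ P⟧ ≅ ⟦P⟧`. -/
def btrace {B : Type u} [Bicategory.{w, v} B] {V : Type u₁} [Category.{v₁} V]
    (sh : Shadow B V) {R S : B} (D : BicatDualData R S) {Q : R ⟶ R} {P : S ⟶ S}
    (f : Q ≫ D.M ⟶ D.M ≫ P) : (sh.sh R).obj Q ⟶ (sh.sh S).obj P :=
  (sh.sh R).map ((ρ_ Q).inv ≫ (Q ◁ D.η) ≫ (α_ Q D.M D.Mv).inv ≫ (f ▷ D.Mv)) ≫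
    (sh.θ (D.M ≫ P) D.Mv).hom ≫
    (sh.sh S).map ((α_ D.Mv D.M P).inv ≫ (D.ε ▷ P) ≫ (λ_ P).hom)

/-! Specialize the hexagon to `P = U_R`. The unit axiom turns `θ_{M⊙N,U}` into unitors, and
naturality of `θ` in its second variable rewrites `θ_{M,N⊙U}` and `θ_{N,U⊙M}` as `θ_{M,N}` and
`θ_{N,M}` conjugated by unitors. The triangle identity cancels the unitors between the two
`θ`'s, so `θ_{N,M} ∘ θ_{M,N}` agrees with the identity after composing with invertible maps. -/

namespace Shadow

variable {B : Type u} [Bicategory.{w, v} B] {V : Type u₁} [Category.{v₁} V] (sh : Shadow B V)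

theorem map_whiskerLeft_θ_hom {R S : B} (M : R ⟶ S) {N N' : S ⟶ R} (g : N ⟶ N') :
    (sh.sh R).map (M ◁ g) ≫ (sh.θ M N').hom = (sh.θ M N).hom ≫ (sh.sh S).map (g ▷ M) := by
  simpa using sh.θ_natural (𝟙 M) g

theorem θ_hom_eq_of_iso {R S : B} (M : R ⟶ S) {N N' : S ⟶ R} (e : N' ≅ N) :
    (sh.θ M N').hom =
      (sh.sh R).map (M ◁ e.hom) ≫ (sh.θ M N).hom ≫ (sh.sh S).map (e.inv ▷ M) := by
  rw [← sh.map_whiskerLeft_θ_hom, ← Functor.map_comp_assoc]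
  simp

theorem θ_id_hom {R : B} (P : R ⟶ R) :
    (sh.θ P (𝟙 R)).hom = (sh.sh R).map ((ρ_ P).hom ≫ (λ_ P).inv) := by
  rw [Functor.map_comp, ← sh.unit_right, assoc, ← Functor.map_comp]
  simp

end Shadow

/-- Involutivity of the shadow isomorphism: `θ_{N,M} ∘ θ_{M,N} = id` for any shadow and any
1-cells `M : R ⟶ S`, `N : S ⟶ R`. -/
theorem shadow_theta_involutive {B : Type u} [Bicategory.{w, v} B] {V : Type u₁}
    [Category.{v₁} V] (sh : Shadow B V) {R S : B} (M : R ⟶ S) (N : S ⟶ R) :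
    (sh.θ M N).hom ≫ (sh.θ N M).hom = 𝟙 ((sh.sh R).obj (M ≫ N)) := by
  have hex := sh.hexagon M N (𝟙 R)
  rw [sh.θ_id_hom, sh.θ_hom_eq_of_iso M (ρ_ N), sh.θ_hom_eq_of_iso N (λ_ M)] at hex
  simp only [assoc, ← Functor.map_comp, ← Functor.map_comp_assoc] at hex
  have hright : (α_ M N (𝟙 R)).hom ≫ M ◁ (ρ_ N).hom = (ρ_ (M ≫ N)).hom := by
    bicategory_coherence
  have htriangle : (ρ_ N).inv ▷ M ≫ (α_ N (𝟙 R) M).hom ≫ N ◁ (λ_ M).hom = 𝟙 (N ≫ M) := by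
    bicategory_coherence
  have hleft : (ρ_ (M ≫ N)).hom ≫ (λ_ (M ≫ N)).inv ≫ (α_ (𝟙 R) M N).inv =
      (ρ_ (M ≫ N)).hom ≫ (λ_ M).inv ▷ N := by
    bicategory_coherence
  rw [hright, htriangle, hleft, CategoryTheory.Functor.map_id, id_comp, Functor.map_comp] at hex
  rw [← cancel_epi ((sh.sh R).map (ρ_ (M ≫ N)).hom),
    ← cancel_mono ((sh.sh R).map ((λ_ M).inv ▷ N))]
  simpa using hex.symm
end

section
/- Tightening: Let B be a bicategory with a shadow ⟦−⟧, let (M, M∨, η, ε) be a dual pair with M : R → S, let f : Q ⊙ M → M ⊙ P be a 2-cell (Q : R → R, P : S → S), and let g : Q′ → Q and h : P → P′ be 2-cells. Then ⟦h⟧ ∘ tr(f) ∘ ⟦g⟧ = tr((id_M ⊙ h) ∘ f ∘ (g ⊙ id_M)) as morphisms ⟦Q′⟧ → ⟦P′⟧. -/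
/-!
Whiskering `g` into the trace's coevaluation leg and `h` into its evaluation leg is
absorbed by naturality of the unitors, associators and interchange law; the only
nonformal step is carrying `M ◁ h` across the cyclic isomorphism `θ`, which is the
naturality of `θ` in its first variable.
-/

open CategoryTheory Category

universe w v u w' v' u' v₁ u₁ v₂ u₂

open Bicategory

namespace Shadow

variable {B : Type u} [Bicategory.{w, v} B] {V : Type u₁} [Category.{v₁} V] (sh : Shadow B V)

theorem θ_hom_naturality_left {R S : B} {M M' : R ⟶ S} (f : M ⟶ M') (N : S ⟶ R) :
    (sh.sh R).map (f ▷ N) ≫ (sh.θ M' N).hom = (sh.θ M N).hom ≫ (sh.sh S).map (N ◁ f) := by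
  simpa using sh.θ_natural f (𝟙 N)

end Shadow

section Tightening

variable {B : Type u} [Bicategory.{w, v} B] {V : Type u₁} [Category.{v₁} V] (sh : Shadow B V)
  {R S : B} (D : BicatDualData R S)

theorem map_comp_btrace {Q Q' : R ⟶ R} {P : S ⟶ S} (g : Q' ⟶ Q) (f : Q ≫ D.M ⟶ D.M ≫ P) :
    (sh.sh R).map g ≫ btrace sh D f = btrace sh D (g ▷ D.M ≫ f) := by
  have coev_natural : g ≫ (ρ_ Q).inv ≫ Q ◁ D.η ≫ (α_ Q D.M D.Mv).inv
      = (ρ_ Q').inv ≫ Q' ◁ D.η ≫ (α_ Q' D.M D.Mv).inv ≫ (g ▷ D.M) ▷ D.Mv := by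
    rw [← associator_inv_naturality_left, whisker_exchange_assoc]
    simp
  simp only [btrace, ← Functor.map_comp_assoc, comp_whiskerRight, reassoc_of% coev_natural]

theorem btrace_comp_map {Q : R ⟶ R} {P P' : S ⟶ S} (f : Q ≫ D.M ⟶ D.M ≫ P) (h : P ⟶ P') :
    btrace sh D f ≫ (sh.sh S).map h = btrace sh D (f ≫ D.M ◁ h) := by
  have ev_natural : D.Mv ◁ D.M ◁ h ≫ (α_ D.Mv D.M P').inv ≫ D.ε ▷ P' ≫ (λ_ P').hom
      = (α_ D.Mv D.M P).inv ≫ D.ε ▷ P ≫ (λ_ P).hom ≫ h := by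
    rw [associator_inv_naturality_right_assoc, whisker_exchange_assoc]
    simp
  simp only [btrace, assoc, comp_whiskerRight, Functor.map_comp,
    reassoc_of% sh.θ_hom_naturality_left (D.M ◁ h)]
  simp only [← Functor.map_comp, ev_natural]

end Tightening

theorem btrace_tightening_general {B : Type u} [Bicategory.{w, v} B] {V : Type u₁}
    [Category.{v₁} V] (sh : Shadow B V) {R S : B}
    (D : BicatDualData R S)
    {Q Q' : R ⟶ R} {P P' : S ⟶ S} (f : Q ≫ D.M ⟶ D.M ≫ P) (g : Q' ⟶ Q) (h : P ⟶ P') :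
    (sh.sh R).map g ≫ btrace sh D f ≫ (sh.sh S).map h
      = btrace sh D ((g ▷ D.M) ≫ f ≫ (D.M ◁ h)) := by
  rw [btrace_comp_map, map_comp_btrace]

/-- Tightening: for a dual pair `(M, M∨, η, ε)` with `M : R ⟶ S`, a 2-cell
`f : Q ⊙ M ⟶ M ⊙ P`, and 2-cells `g : Q' ⟶ Q`, `h : P ⟶ P'`,
`⟦h⟧ ∘ tr(f) ∘ ⟦g⟧ = tr((id_M ⊙ h) ∘ f ∘ (g ⊙ id_M))`. -/
theorem btrace_tightening {B : Type u} [Bicategory.{w, v} B] {V : Type u₁}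
    [Category.{v₁} V] (sh : Shadow B V) {R S : B}
    (D : BicatDualData R S) (hD : D.IsDualPair)
    {Q Q' : R ⟶ R} {P P' : S ⟶ S} (f : Q ≫ D.M ⟶ D.M ≫ P) (g : Q' ⟶ Q) (h : P ⟶ P') :
    (sh.sh R).map g ≫ btrace sh D f ≫ (sh.sh S).map h
      = btrace sh D ((g ▷ D.M) ≫ f ≫ (D.M ◁ h)) :=
  btrace_tightening_general sh D f g h
end

section
/- Duals invert conjunctional transformations: Let F, G : B → C be lax functors of bicategories, let α : F → G be a conjunctional transformation, and let (M, M∨, η, ε) be a dual pair in B with M : R → S such that both F and G preserve this dual (i.e., i^F_R, i^F_S, c^F_{M,M∨}, i^G_R, i^G_S, and c^G_{M,M∨} are all invertible, giving induced dual pairs (F(M), F(M∨)) and (G(M), G(M∨)) in C). Then the component α_M : F(M) ⊙ α_S → α_R ⊙ G(M) is an invertible 2-cell, whose inverse is the mate of α_{M∨}: the composite α_R ⊙ G(M) → (F(M) ⊙ F(M∨)) ⊙ (α_R ⊙ G(M)) → F(M) ⊙ ((α_S ⊙ G(M∨)) ⊙ G(M)) → F(M) ⊙ α_S obtained by whiskering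 with the coevaluation of (F(M), F(M∨)), then with α_{M∨}, then with the evaluation of (G(M), G(M∨)) (structural isomorphisms inserted as needed). -/
/-! The inverse of `α_M` is the mate of `α_{M∨}` with respect to the image dual pairs
`(F M, F M∨)` and `(G M, G M∨)`. The composition, naturality and unit axioms of `α` say that
`α_M` and `α_{M∨}` intertwine the evaluations of these two dual pairs, and likewise their
coevaluations. Given such a pair of 2-cells, sliding `α_M` through the mate of `α_{M∨}` and
applying the evaluation compatibility collapses `α_M ≫ mate` to the triangle identity of
`(F M, F M∨)` whiskered by `α_S`; dually, the coevaluation compatibility collapses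
`mate ≫ α_M` to the triangle identity of `(G M, G M∨)` whiskered by `α_R`. -/

open CategoryTheory Category

universe w v u w' v' u' v₁ u₁ v₂ u₂

open Bicategory

/-- The image duality data of `(M, M∨, η, ε)` under a lax functor `F` whose relevant
structural 2-cells are invertible: the coevaluation is `c_{M,M∨}⁻¹ ∘ F(η) ∘ i_R` and the
evaluation is `i_S⁻¹ ∘ F(ε) ∘ c_{M∨,M}`. -/
noncomputable abbrev laxImage {B : Type u} {C : Type u'} [Bicategory.{w, v} B]
    [Bicategory.{w', v'} C] (F : LaxFunctor B C) {R S : B} (D : BicatDualData R S)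
    [IsIso (F.mapId R)] [IsIso (F.mapId S)] [IsIso (F.mapComp D.M D.Mv)] :
    BicatDualData (F.obj R) (F.obj S) :=
  ⟨F.map D.M, F.map D.Mv, F.mapId R ≫ F.map₂ D.η ≫ inv (F.mapComp D.M D.Mv),
    F.mapComp D.Mv D.M ≫ F.map₂ D.ε ≫ inv (F.mapId S)⟩

/-- A conjunctional transformation `α : F ⟶ G` between lax functors of bicategories: for
each 0-cell `R` a dual pair `(α_R, α_R∨, η_R, ε_R)` with `α_R : F R ⟶ G R`, and for each
1-cell `M : R ⟶ S` a 2-cell `α_M : F(M) ⊙ α_S ⟶ α_R ⊙ G(M)`, satisfying naturality and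
the unit and composition coherence axioms. -/
structure ConjTransformation {B : Type u} {C : Type u'} [Bicategory.{w, v} B]
    [Bicategory.{w', v'} C] (F G : LaxFunctor B C) where
  conj : ∀ R : B, BicatDualData (F.obj R) (G.obj R)
  conj_isDualPair : ∀ R : B, (conj R).IsDualPair
  app : ∀ {R S : B} (M : R ⟶ S), F.map M ≫ (conj S).M ⟶ (conj R).M ≫ G.map M
  naturality : ∀ {R S : B} {M N : R ⟶ S} (τ : M ⟶ N),
    (F.map₂ τ ▷ (conj S).M) ≫ app N = app M ≫ ((conj R).M ◁ G.map₂ τ)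
  unit : ∀ R : B,
    (F.mapId R ▷ (conj R).M) ≫ app (𝟙 R)
      = (λ_ ((conj R).M)).hom ≫ (ρ_ ((conj R).M)).inv ≫ ((conj R).M ◁ G.mapId R)
  comp : ∀ {R S T : B} (M : R ⟶ S) (N : S ⟶ T),
    (F.mapComp M N ▷ (conj T).M) ≫ app (M ≫ N)
      = (α_ (F.map M) (F.map N) ((conj T).M)).hom ≫ (F.map M ◁ app N) ≫
          (α_ (F.map M) ((conj S).M) (G.map N)).inv ≫ (app M ▷ G.map N) ≫
          (α_ ((conj R).M) (G.map M) (G.map N)).hom ≫ ((conj R).M ◁ G.mapComp M N)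

/-- The mate of `α_{M∨}`: the composite
`α_R ⊙ G(M) ⟶ (F(M) ⊙ F(M∨)) ⊙ (α_R ⊙ G(M)) ⟶ F(M) ⊙ ((α_S ⊙ G(M∨)) ⊙ G(M))
⟶ F(M) ⊙ α_S` obtained by whiskering with the coevaluation of the induced dual pair
`(F M, F M∨)`, then with `α_{M∨}`, then with the evaluation of the induced dual pair
`(G M, G M∨)` (structural isomorphisms inserted as needed). -/
noncomputable def ConjTransformation.dualMate {B : Type u} {C : Type u'}
    [Bicategory.{w, v} B] [Bicategory.{w', v'} C] {F G : LaxFunctor B C}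
    (t : ConjTransformation F G) {R S : B} (D : BicatDualData R S)
    [IsIso (F.mapId R)] [IsIso (F.mapId S)] [IsIso (F.mapComp D.M D.Mv)]
    [IsIso (G.mapId R)] [IsIso (G.mapId S)] [IsIso (G.mapComp D.M D.Mv)] :
    (t.conj R).M ≫ G.map D.M ⟶ F.map D.M ≫ (t.conj S).M :=
  (λ_ ((t.conj R).M ≫ G.map D.M)).inv ≫
    ((laxImage F D).η ▷ ((t.conj R).M ≫ G.map D.M)) ≫
    (α_ (F.map D.M) (F.map D.Mv) ((t.conj R).M ≫ G.map D.M)).hom ≫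
    (F.map D.M ◁ (α_ (F.map D.Mv) ((t.conj R).M) (G.map D.M)).inv) ≫
    (F.map D.M ◁ (t.app D.Mv ▷ G.map D.M)) ≫
    (F.map D.M ◁ (α_ ((t.conj S).M) (G.map D.Mv) (G.map D.M)).hom) ≫
    (F.map D.M ◁ ((t.conj S).M ◁ (laxImage G D).ε)) ≫
    (F.map D.M ◁ (ρ_ ((t.conj S).M)).hom)

theorem laxImage_isDualPair {B : Type u} {C : Type u'} [Bicategory.{w, v} B]
    [Bicategory.{w', v'} C] (F : LaxFunctor B C) {R S : B} {D : BicatDualData R S}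
    (hD : D.IsDualPair) [IsIso (F.mapId R)] [IsIso (F.mapId S)]
    [IsIso (F.mapComp D.M D.Mv)] :
    (laxImage F D).IsDualPair := by
  obtain ⟨hM, hMv⟩ := hD
  constructor
  · have hright : F.map D.M ◁ inv (F.mapId S) ≫ (ρ_ (F.map D.M)).hom =
        F.mapComp D.M (𝟙 S) ≫ F.map₂ (ρ_ D.M).hom := by
      rw [F.map₂_rightUnitor_hom, ← whiskerLeft_comp_assoc, IsIso.inv_hom_id,
        whiskerLeft_id, id_comp]
    simp only [comp_whiskerRight, whiskerLeft_comp, assoc]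
    rw [hright, ← F.mapComp_naturality_right_assoc, F.mapComp_assoc_right_assoc,
      Iso.hom_inv_id_assoc, ← comp_whiskerRight_assoc (inv (F.mapComp D.M D.Mv)),
      IsIso.inv_hom_id, id_whiskerRight, id_comp, ← F.mapComp_naturality_left_assoc,
      ← F.map₂_leftUnitor_assoc, ← F.map₂_comp_assoc, ← F.map₂_comp_assoc,
      ← F.map₂_comp_assoc, ← F.map₂_comp]
    simp only [assoc, hM, PrelaxFunctor.map₂_id]
  · have hleft : inv (F.mapId S) ▷ F.map D.Mv ≫ (λ_ (F.map D.Mv)).hom =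
        F.mapComp (𝟙 S) D.Mv ≫ F.map₂ (λ_ D.Mv).hom := by
      rw [F.map₂_leftUnitor_hom, ← comp_whiskerRight_assoc, IsIso.inv_hom_id,
        id_whiskerRight, id_comp]
    simp only [comp_whiskerRight, whiskerLeft_comp, assoc]
    rw [hleft, ← F.mapComp_naturality_left_assoc, F.mapComp_assoc_left_assoc,
      Iso.inv_hom_id_assoc, ← whiskerLeft_comp_assoc (F.map D.Mv) (inv (F.mapComp D.M D.Mv)),
      IsIso.inv_hom_id, whiskerLeft_id, id_comp, ← F.mapComp_naturality_right_assoc,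
      ← F.map₂_rightUnitor_assoc, ← F.map₂_comp_assoc, ← F.map₂_comp_assoc,
      ← F.map₂_comp_assoc, ← F.map₂_comp]
    simp only [assoc, hMv, PrelaxFunctor.map₂_id]

namespace BicatDualData

variable {C : Type u'} [Bicategory.{w', v'} C] {x y x' y' : C}
  (P : BicatDualData x y) (Q : BicatDualData x' y') {A : y ⟶ y'} {A' : x ⟶ x'}

noncomputable def mate (b : P.Mv ≫ A' ⟶ A ≫ Q.Mv) : A' ≫ Q.M ⟶ P.M ≫ A :=
  (λ_ (A' ≫ Q.M)).inv ≫ (P.η ▷ (A' ≫ Q.M)) ≫ (α_ P.M P.Mv (A' ≫ Q.M)).hom ≫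
    (P.M ◁ (α_ P.Mv A' Q.M).inv) ≫ (P.M ◁ (b ▷ Q.M)) ≫ (P.M ◁ (α_ A Q.Mv Q.M).hom) ≫
    (P.M ◁ (A ◁ Q.ε)) ≫ (P.M ◁ (ρ_ A).hom)

variable {P Q}

theorem comp_mate_eq_id (hP : P.IsDualPair) {a : P.M ≫ A ⟶ A' ≫ Q.M}
    {b : P.Mv ≫ A' ⟶ A ≫ Q.Mv}
    (hε : (P.Mv ◁ a) ≫ (α_ P.Mv A' Q.M).inv ≫ (b ▷ Q.M) ≫ (α_ A Q.Mv Q.M).hom ≫ (A ◁ Q.ε)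
      = (α_ P.Mv P.M A).inv ≫ (P.ε ▷ A) ≫ (λ_ A).hom ≫ (ρ_ A).inv) :
    a ≫ P.mate Q b = 𝟙 (P.M ≫ A) := by
  calc a ≫ P.mate Q b
      = (λ_ (P.M ≫ A)).inv ≫ (P.η ▷ (P.M ≫ A)) ≫ (α_ P.M P.Mv (P.M ≫ A)).hom ≫
          (P.M ◁ (α_ P.Mv P.M A).inv) ≫ (P.M ◁ (α_ P.Mv P.M A).hom) ≫
          (P.M ◁ ((P.Mv ◁ a) ≫ (α_ P.Mv A' Q.M).inv ≫ (b ▷ Q.M) ≫ (α_ A Q.Mv Q.M).hom ≫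
            (A ◁ Q.ε))) ≫ (P.M ◁ (ρ_ A).hom) := by
        rw [mate, leftUnitor_inv_naturality_assoc, whisker_exchange_assoc]
        bicategory
    _ = ((λ_ P.M).inv ≫ (P.η ▷ P.M) ≫ (α_ P.M P.Mv P.M).hom ≫ (P.M ◁ P.ε) ≫
          (ρ_ P.M).hom) ▷ A := by
        rw [hε]
        bicategory
    _ = 𝟙 (P.M ≫ A) := by rw [hP.1, id_whiskerRight]

theorem mate_comp_eq_id (hQ : Q.IsDualPair) {a : P.M ≫ A ⟶ A' ≫ Q.M}
    {b : P.Mv ≫ A' ⟶ A ≫ Q.Mv}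
    (hη : (P.η ▷ A') ≫ (α_ P.M P.Mv A').hom ≫ (P.M ◁ b) ≫ (α_ P.M A Q.Mv).inv ≫ (a ▷ Q.Mv) ≫
      (α_ A' Q.M Q.Mv).hom = (λ_ A').hom ≫ (ρ_ A').inv ≫ (A' ◁ Q.η)) :
    P.mate Q b ≫ a = 𝟙 (A' ≫ Q.M) := by
  calc P.mate Q b ≫ a
      = (λ_ (A' ≫ Q.M)).inv ≫ (P.η ▷ (A' ≫ Q.M)) ≫ (α_ P.M P.Mv (A' ≫ Q.M)).hom ≫
          (P.M ◁ (α_ P.Mv A' Q.M).inv) ≫ (P.M ◁ (b ▷ Q.M)) ≫ (P.M ◁ (α_ A Q.Mv Q.M).hom) ≫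
          (α_ P.M A (Q.Mv ≫ Q.M)).inv ≫ ((P.M ≫ A) ◁ Q.ε) ≫ (a ▷ 𝟙 y') ≫
          (ρ_ (A' ≫ Q.M)).hom := by
        rw [mate, rightUnitor_naturality]
        bicategory
    _ = (λ_ (A' ≫ Q.M)).inv ≫ (α_ (𝟙 x) A' Q.M).inv ≫
          (((P.η ▷ A') ≫ (α_ P.M P.Mv A').hom ≫ (P.M ◁ b) ≫ (α_ P.M A Q.Mv).inv ≫
            (a ▷ Q.Mv) ≫ (α_ A' Q.M Q.Mv).hom) ▷ Q.M) ≫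
          (α_ A' (Q.M ≫ Q.Mv) Q.M).hom ≫ (A' ◁ (α_ Q.M Q.Mv Q.M).hom) ≫
          (A' ◁ (Q.M ◁ Q.ε)) ≫ (A' ◁ (ρ_ Q.M).hom) := by
        rw [whisker_exchange_assoc]
        bicategory
    _ = A' ◁ ((λ_ Q.M).inv ≫ (Q.η ▷ Q.M) ≫ (α_ Q.M Q.Mv Q.M).hom ≫ (Q.M ◁ Q.ε) ≫
          (ρ_ Q.M).hom) := by
        rw [hη]
        bicategory
    _ = 𝟙 (A' ≫ Q.M) := by rw [hQ.1, whiskerLeft_id]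

end BicatDualData

namespace ConjTransformation

variable {B : Type u} {C : Type u'} [Bicategory.{w, v} B] [Bicategory.{w', v'} C]
  {F G : LaxFunctor B C} (t : ConjTransformation F G)

theorem app_id (R : B) [IsIso (F.mapId R)] :
    t.app (𝟙 R) = (inv (F.mapId R) ▷ (t.conj R).M) ≫ (λ_ (t.conj R).M).hom ≫
      (ρ_ (t.conj R).M).inv ≫ ((t.conj R).M ◁ G.mapId R) := by
  rw [← t.unit, ← comp_whiskerRight_assoc, IsIso.inv_hom_id, id_whiskerRight, id_comp]

theorem app_compatible_counit {R S : B} (M : R ⟶ S) (N : S ⟶ R) (e : N ≫ M ⟶ 𝟙 S)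
    [IsIso (F.mapId S)] [IsIso (G.mapId S)] :
    (F.map N ◁ t.app M) ≫ (α_ (F.map N) (t.conj R).M (G.map M)).inv ≫ (t.app N ▷ G.map M) ≫
      (α_ (t.conj S).M (G.map N) (G.map M)).hom ≫
      ((t.conj S).M ◁ (G.mapComp N M ≫ G.map₂ e ≫ inv (G.mapId S))) =
    (α_ (F.map N) (F.map M) (t.conj S).M).inv ≫
      ((F.mapComp N M ≫ F.map₂ e ≫ inv (F.mapId S)) ▷ (t.conj S).M) ≫
      (λ_ (t.conj S).M).hom ≫ (ρ_ (t.conj S).M).inv := by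
  rw [← cancel_epi (α_ (F.map N) (F.map M) (t.conj S).M).hom]
  simp only [whiskerLeft_comp, comp_whiskerRight, assoc, Iso.hom_inv_id_assoc]
  rw [← reassoc_of% (t.comp N M), ← reassoc_of% (t.naturality e), t.app_id]
  simp only [assoc]
  rw [← whiskerLeft_comp, IsIso.hom_inv_id, whiskerLeft_id, comp_id]

theorem app_compatible_unit {R S : B} (M : R ⟶ S) (N : S ⟶ R) (h : 𝟙 R ⟶ M ≫ N)
    [IsIso (F.mapComp M N)] [IsIso (G.mapComp M N)] :
    ((F.mapId R ≫ F.map₂ h ≫ inv (F.mapComp M N)) ▷ (t.conj R).M) ≫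
      (α_ (F.map M) (F.map N) (t.conj R).M).hom ≫ (F.map M ◁ t.app N) ≫
      (α_ (F.map M) (t.conj S).M (G.map N)).inv ≫ (t.app M ▷ G.map N) ≫
      (α_ (t.conj R).M (G.map M) (G.map N)).hom =
    (λ_ (t.conj R).M).hom ≫ (ρ_ (t.conj R).M).inv ≫
      ((t.conj R).M ◁ (G.mapId R ≫ G.map₂ h ≫ inv (G.mapComp M N))) := by
  rw [← cancel_mono ((t.conj R).M ◁ G.mapComp M N)]
  simp only [comp_whiskerRight, assoc, ← whiskerLeft_comp, IsIso.inv_hom_id, comp_id]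
  rw [← t.comp M N, ← comp_whiskerRight_assoc (inv (F.mapComp M N)) (F.mapComp M N),
    IsIso.inv_hom_id, id_whiskerRight, id_comp, t.naturality h, reassoc_of% (t.unit R),
    whiskerLeft_comp]

end ConjTransformation

/-- "Duals invert" for conjunctional transformations: if both `F` and `G` preserve the
dual pair `(M, M∨, η, ε)`, then the component `α_M : F(M) ⊙ α_S ⟶ α_R ⊙ G(M)` is an
invertible 2-cell, whose inverse is the mate of `α_{M∨}`. -/
theorem conjTransformation_duals_invert {B : Type u} {C : Type u'}
    [Bicategory.{w, v} B] [Bicategory.{w', v'} C] (F G : LaxFunctor B C)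
    (t : ConjTransformation F G) {R S : B} (D : BicatDualData R S) (hD : D.IsDualPair)
    [IsIso (F.mapId R)] [IsIso (F.mapId S)] [IsIso (F.mapComp D.M D.Mv)]
    [IsIso (G.mapId R)] [IsIso (G.mapId S)] [IsIso (G.mapComp D.M D.Mv)] :
    t.app D.M ≫ t.dualMate D = 𝟙 (F.map D.M ≫ (t.conj S).M) ∧
      t.dualMate D ≫ t.app D.M = 𝟙 ((t.conj R).M ≫ G.map D.M) :=
  -- `t.dualMate D` unfolds to `(laxImage F D).mate (laxImage G D) (t.app D.Mv)`.
  ⟨BicatDualData.comp_mate_eq_id (Q := laxImage G D) (laxImage_isDualPair F hD)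
      (t.app_compatible_counit D.M D.Mv D.ε),
    BicatDualData.mate_comp_eq_id (P := laxImage F D) (laxImage_isDualPair G hD)
      (t.app_compatible_unit D.M D.Mv D.η)⟩
end
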